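/- Let A be the nilpotent Matsuo algebra of the complete quadrilateral over a field k of characteristic 2, with points labeled a,b,c,x,y,z and lines ℓ={a,b,c}, m={a,y,z}, n={b,x,z}, {c,x,y}. Then A decomposes as a direct sum of eigenspaces of ad_{s_ℓ}: the 0-eigenspace is the 4-dimensional span of a, b, c, and x+y+z, and the 1-eigenspace is the 2-dimensional span of s_ℓ·x and s_ℓ·y. -/

import Mathlib

/-- The six points of the complete quadrilateral (dual affine plane of order 2). -/
inductive CQPt | A | B | C | X | Y | Z
deriving DecidableEq

/-- The "opposite point" involution of the complete quadrilateral. -/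
def CQPt.opp : CQPt → CQPt
  | .A => .X | .X => .A | .B => .Y | .Y => .B | .C => .Z | .Z => .C

/-- Collinearity in the complete quadrilateral with lines
{A,B,C}, {A,Y,Z}, {B,X,Z}, {C,X,Y}: two points are collinear iff they are
distinct and not opposite. -/
def CQPt.col (p q : CQPt) : Prop := p ≠ q ∧ q ≠ p.opp

/-- The third point on the line through two distinct collinear points of the
complete quadrilateral. -/
def CQPt.third : CQPt → CQPt → CQPt
  | .A, .B => .C | .B, .A => .C | .A, .C => .B | .C, .A => .B | .B, .C => .A | .C, .B => .A
  | .A, .Y => .Z | .Y, .A => .Z | .A, .Z => .Y | .Z, .A => .Y | .Y, .Z => .A | .Z, .Y => .A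
  | .B, .X => .Z | .X, .B => .Z | .B, .Z => .X | .Z, .B => .X | .X, .Z => .B | .Z, .X => .B
  | .C, .X => .Y | .X, .C => .Y | .C, .Y => .X | .Y, .C => .X | .X, .Y => .C | .Y, .X => .C
  | p, _ => p

/-- `A` is the nilpotent Matsuo algebra (char 2) of the geometry `(col, third)`,
with `e` the natural basis indexed by the points. -/
structure IsNilMatsuo (R : Type*) {A P : Type*} [CommRing R] [NonUnitalNonAssocCommRing A]
    [Module R A] (col : P → P → Prop) (third : P → P → P) (e : P → A) : Prop where
  char2 : (2 : R) = 0
  mul_same : ∀ p, e p * e p = 0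
  mul_of_not_col : ∀ p q, p ≠ q → ¬ col p q → e p * e q = 0
  mul_of_col : ∀ p q, p ≠ q → col p q → e p * e q = e p + e q + e (third p q)

/-!
Over a field of characteristic 2, `s = a + b + c` annihilates `a`, `b`, `c`, and its products
with `x`, `y`, `z` are the sums of the four points off the corresponding opposite pair; a
direct check shows `s · (s · v) = s · v` on the basis. So `ad_s` is idempotent, and `A` splits
as its kernel (the `0`-eigenspace) plus its image (the `1`-eigenspace). The image is spanned by
`s · x` and `s · y` (as `s · z = s · x + s · y`), which are independent, and the four
independent vectors `a, b, c, x + y + z` lie in the kernel, which has dimension `6 - 2 = 4`.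
-/

instance : Fintype CQPt :=
  ⟨⟨{.A, .B, .C, .X, .Y, .Z}, by decide⟩, fun x => by cases x <;> decide⟩

theorem Module.End.eigenspace_one_eq_range {R M : Type*} [CommRing R] [AddCommGroup M]
    [Module R M] {f : Module.End R M} (hf : IsIdempotentElem f) :
    f.eigenspace 1 = LinearMap.range f := by
  ext x
  rw [Module.End.mem_eigenspace_iff, one_smul, LinearMap.IsIdempotentElem.mem_range_iff hf]

/-- The element `s_ℓ` of the line `ℓ = {A, B, C}`. -/
def sumABC {A : Type*} [Add A] (e : CQPt → A) : A := e .A + e .B + e .C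

namespace IsNilMatsuo

variable {R A : Type*} [CommRing R] [NonUnitalNonAssocCommRing A] [Module R A] {e : CQPt → A}

theorem cq_mul_eq_ite (hM : IsNilMatsuo R CQPt.col CQPt.third e) (p q : CQPt) :
    e p * e q = if p = q ∨ q = p.opp then 0 else e p + e q + e (p.third q) := by
  split_ifs with h
  · rcases h with rfl | h
    · exact hM.mul_same p
    · exact hM.mul_of_not_col p q (by cases p <;> subst h <;> decide) fun hc => hc.2 h
  · rw [not_or] at h
    exact hM.mul_of_col p q h.1 h

theorem sumABC_mul_of_mem_line (hM : IsNilMatsuo R CQPt.col CQPt.third e) {p : CQPt}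
    (hp : p = .A ∨ p = .B ∨ p = .C) : sumABC e * e p = 0 := by
  rcases hp with rfl | rfl | rfl <;>
  · simp only [sumABC, add_mul, hM.cq_mul_eq_ite, CQPt.opp, CQPt.third, reduceCtorEq, or_self,
      or_false, ↓reduceIte, zero_add, add_zero]
    linear_combination (norm := module) hM.char2 • (e .A + e .B + e .C)

theorem sumABC_mul_X (hM : IsNilMatsuo R CQPt.col CQPt.third e) :
    sumABC e * e .X = e .B + e .C + e .Y + e .Z := by
  simp only [sumABC, add_mul, hM.cq_mul_eq_ite, CQPt.opp, CQPt.third, reduceCtorEq, or_self,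
    or_true, ↓reduceIte, zero_add]
  linear_combination (norm := module) hM.char2 • e .X

theorem sumABC_mul_Y (hM : IsNilMatsuo R CQPt.col CQPt.third e) :
    sumABC e * e .Y = e .A + e .C + e .X + e .Z := by
  simp only [sumABC, add_mul, hM.cq_mul_eq_ite, CQPt.opp, CQPt.third, reduceCtorEq, or_self,
    or_true, ↓reduceIte, add_zero]
  linear_combination (norm := module) hM.char2 • e .Y

theorem sumABC_mul_Z (hM : IsNilMatsuo R CQPt.col CQPt.third e) :
    sumABC e * e .Z = e .A + e .B + e .X + e .Y := by
  simp only [sumABC, add_mul, hM.cq_mul_eq_ite, CQPt.opp, CQPt.third, reduceCtorEq, or_self,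
    or_true, ↓reduceIte, add_zero]
  linear_combination (norm := module) hM.char2 • e .Z

end IsNilMatsuo

section SumABC

variable {R A : Type*} [CommRing R] [NonUnitalNonAssocCommRing A] [Module R A]

theorem isIdempotentElem_mulLeft_sumABC [SMulCommClass R A A] (e : Module.Basis CQPt R A)
    (hM : IsNilMatsuo R CQPt.col CQPt.third ⇑e) :
    IsIdempotentElem (LinearMap.mulLeft R (sumABC ⇑e)) := by
  have hline := fun p hp => hM.sumABC_mul_of_mem_line (p := p) hp
  refine e.ext fun p => ?_
  simp only [Module.End.mul_apply, LinearMap.mulLeft_apply]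
  cases p
  case A | B | C => rw [hline _ (by simp), mul_zero]
  case X =>
    rw [hM.sumABC_mul_X, mul_add, mul_add, mul_add, hline .B (by simp), hline .C (by simp),
      hM.sumABC_mul_Y, hM.sumABC_mul_Z]
    linear_combination (norm := module) hM.char2 • (e .A + e .X)
  case Y =>
    rw [hM.sumABC_mul_Y, mul_add, mul_add, mul_add, hline .A (by simp), hline .C (by simp),
      hM.sumABC_mul_X, hM.sumABC_mul_Z]
    linear_combination (norm := module) hM.char2 • (e .B + e .Y)
  case Z =>
    rw [hM.sumABC_mul_Z, mul_add, mul_add, mul_add, hline .A (by simp), hline .B (by simp),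
      hM.sumABC_mul_X, hM.sumABC_mul_Y]
    linear_combination (norm := module) hM.char2 • (e .C + e .Z)

theorem range_mulLeft_sumABC [SMulCommClass R A A] (e : Module.Basis CQPt R A)
    (hM : IsNilMatsuo R CQPt.col CQPt.third ⇑e) :
    LinearMap.range (LinearMap.mulLeft R (sumABC ⇑e)) =
      Submodule.span R {sumABC ⇑e * e .X, sumABC ⇑e * e .Y} := by
  have hX : sumABC ⇑e * e .X ∈ Submodule.span R {sumABC ⇑e * e .X, sumABC ⇑e * e .Y} :=
    Submodule.subset_span (by simp)
  have hY : sumABC ⇑e * e .Y ∈ Submodule.span R {sumABC ⇑e * e .X, sumABC ⇑e * e .Y} :=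
    Submodule.subset_span (by simp)
  have hZ : sumABC ⇑e * e .Z = sumABC ⇑e * e .X + sumABC ⇑e * e .Y := by
    rw [hM.sumABC_mul_X, hM.sumABC_mul_Y, hM.sumABC_mul_Z]
    linear_combination (norm := module) -(hM.char2 • (e .C + e .Z))
  refine le_antisymm ?_ (Submodule.span_le.2 ?_)
  · rw [LinearMap.range_eq_map, ← e.span_eq, Submodule.map_span, Submodule.span_le]
    rintro _ ⟨_, ⟨p, rfl⟩, rfl⟩
    rw [SetLike.mem_coe, LinearMap.mulLeft_apply]
    cases p
    case A | B | C => simp [hM.sumABC_mul_of_mem_line]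
    case X => exact hX
    case Y => exact hY
    case Z => rw [hZ]; exact add_mem hX hY
  · rintro _ (rfl | rfl)
    exacts [⟨e .X, rfl⟩, ⟨e .Y, rfl⟩]

theorem span_le_ker_mulLeft_sumABC [SMulCommClass R A A] (e : Module.Basis CQPt R A)
    (hM : IsNilMatsuo R CQPt.col CQPt.third ⇑e) :
    Submodule.span R {e .A, e .B, e .C, e .X + e .Y + e .Z} ≤
      LinearMap.ker (LinearMap.mulLeft R (sumABC ⇑e)) := by
  rw [Submodule.span_le]
  rintro _ (rfl | rfl | rfl | rfl) <;>
    rw [SetLike.mem_coe, LinearMap.mem_ker, LinearMap.mulLeft_apply]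
  iterate 3 exact hM.sumABC_mul_of_mem_line (by simp)
  rw [mul_add, mul_add, hM.sumABC_mul_X, hM.sumABC_mul_Y, hM.sumABC_mul_Z]
  linear_combination (norm := module) hM.char2 • (e .A + e .B + e .C + e .X + e .Y + e .Z)

theorem linearIndependent_sumABC_mul_X_Y (e : Module.Basis CQPt R A)
    (hM : IsNilMatsuo R CQPt.col CQPt.third ⇑e) :
    LinearIndependent R ![sumABC ⇑e * e .X, sumABC ⇑e * e .Y] := by
  rw [LinearIndependent.pair_iff, hM.sumABC_mul_X, hM.sumABC_mul_Y]
  intro a b h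
  constructor
  · simpa [Finsupp.single_apply] using congrArg (e.coord .B) h
  · simpa [Finsupp.single_apply] using congrArg (e.coord .A) h

theorem linearIndependent_A_B_C_XYZ (e : Module.Basis CQPt R A) :
    LinearIndependent R ![e .A, e .B, e .C, e .X + e .Y + e .Z] := by
  rw [Fintype.linearIndependent_iff]
  intro c hc i
  simp only [Fin.sum_univ_four, Matrix.cons_val_zero, Matrix.cons_val_one, Matrix.cons_val_two,
    Matrix.cons_val_three] at hc
  fin_cases i
  · simpa [Finsupp.single_apply] using congrArg (e.coord .A) hc
  · simpa [Finsupp.single_apply] using congrArg (e.coord .B) hc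
  · simpa [Finsupp.single_apply] using congrArg (e.coord .C) hc
  · simpa [Finsupp.single_apply] using congrArg (e.coord .X) hc

theorem finrank_range_mulLeft_sumABC [Nontrivial R] [SMulCommClass R A A]
    (e : Module.Basis CQPt R A) (hM : IsNilMatsuo R CQPt.col CQPt.third ⇑e) :
    Module.finrank R (LinearMap.range (LinearMap.mulLeft R (sumABC ⇑e))) = 2 := by
  rw [range_mulLeft_sumABC e hM, ← Matrix.range_cons_cons_empty _ _ ![],
    finrank_span_eq_card (linearIndependent_sumABC_mul_X_Y e hM), Fintype.card_fin]

theorem finrank_span_A_B_C_XYZ [Nontrivial R] (e : Module.Basis CQPt R A) :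
    Module.finrank R (Submodule.span R {e .A, e .B, e .C, e .X + e .Y + e .Z}) = 4 := by
  have := finrank_span_eq_card (linearIndependent_A_B_C_XYZ e)
  rwa [Matrix.range_cons, Matrix.range_cons, Matrix.range_cons, Matrix.range_cons_empty] at this

end SumABC

theorem stmt8_general {k A : Type*} [Field k] [NonUnitalNonAssocCommRing A]
    [Module k A] [SMulCommClass k A A]
    (e : Module.Basis CQPt k A) (hM : IsNilMatsuo k CQPt.col CQPt.third ⇑e)
    (s : A) (hs : s = e .A + e .B + e .C) :
    Module.End.eigenspace (LinearMap.mulLeft k s) 0 =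
        Submodule.span k {e .A, e .B, e .C, e .X + e .Y + e .Z} ∧
      Module.End.eigenspace (LinearMap.mulLeft k s) 1 =
        Submodule.span k {s * e .X, s * e .Y} ∧
      IsCompl (Module.End.eigenspace (LinearMap.mulLeft k s) 0)
        (Module.End.eigenspace (LinearMap.mulLeft k s) 1) ∧
      Module.finrank k (Module.End.eigenspace (LinearMap.mulLeft k s) 0) = 4 ∧
      Module.finrank k (Module.End.eigenspace (LinearMap.mulLeft k s) 1) = 2 := by
  obtain rfl : s = sumABC ⇑e := hs
  have : FiniteDimensional k A := .of_basis e
  have hidem := isIdempotentElem_mulLeft_sumABC e hM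
  have hcompl := (LinearMap.IsIdempotentElem.isCompl hidem).symm
  have hrank_ker : Module.finrank k (LinearMap.ker (LinearMap.mulLeft k (sumABC ⇑e))) = 4 := by
    have := Submodule.finrank_add_eq_of_isCompl hcompl
    rw [finrank_range_mulLeft_sumABC e hM, Module.finrank_eq_card_basis e] at this
    exact Nat.add_right_cancel (this.trans rfl)
  have hker := Submodule.eq_of_le_of_finrank_eq (span_le_ker_mulLeft_sumABC e hM)
    ((finrank_span_A_B_C_XYZ e).trans hrank_ker.symm)
  rw [Module.End.eigenspace_zero, Module.End.eigenspace_one_eq_range hidem]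
  exact ⟨hker.symm, range_mulLeft_sumABC e hM, hcompl, hrank_ker,
    finrank_range_mulLeft_sumABC e hM⟩

/-- For the nilpotent Matsuo algebra of the complete quadrilateral over a field of
characteristic 2 and the line ℓ = {a,b,c}: `A` is the direct sum of the eigenspaces
of `ad_{s_ℓ}`; the 0-eigenspace is the 4-dimensional span of `a, b, c, x+y+z` and the
1-eigenspace is the 2-dimensional span of `s_ℓ·x` and `s_ℓ·y`. -/
theorem stmt8 {k A : Type*} [Field k] [NonUnitalNonAssocCommRing A]
    [Module k A] [SMulCommClass k A A] [IsScalarTower k A A]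
    (e : Module.Basis CQPt k A) (hM : IsNilMatsuo k CQPt.col CQPt.third ⇑e)
    (s : A) (hs : s = e .A + e .B + e .C) :
    Module.End.eigenspace (LinearMap.mulLeft k s) 0 =
        Submodule.span k {e .A, e .B, e .C, e .X + e .Y + e .Z} ∧
      Module.End.eigenspace (LinearMap.mulLeft k s) 1 =
        Submodule.span k {s * e .X, s * e .Y} ∧
      IsCompl (Module.End.eigenspace (LinearMap.mulLeft k s) 0)
        (Module.End.eigenspace (LinearMap.mulLeft k s) 1) ∧
      Module.finrank k (Module.End.eigenspace (LinearMap.mulLeft k s) 0) = 4 ∧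
      Module.finrank k (Module.End.eigenspace (LinearMap.mulLeft k s) 1) = 2 :=
  stmt8_general e hM s hs
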